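/- arXiv:2207.13547 — 3 statements merged into one kernel-verified Lean document; each statement's English description precedes it below -/
import Mathlib

section
/- (Reappearance of critical Floquet multipliers.) Let d ∈ ℕ and let f : ℂ^d × ℂ^d → ℂ^d be continuously differentiable. Let ũ : ℝ → ℂ^d be a T-periodic (T > 0) differentiable solution of ũ'(t) = f(ũ(t), ũ(t − τ̃)) for some τ̃ ∈ ℝ, and let w : ℝ → ℂ^d be a differentiable function satisfying the variational equation w'(t) = A(t)w(t) + B(t)w(t − τ̃) for all t, where A(t) = ∂ₓf(ũ(t), ũ(t − τ̃)) and B(t) = ∂_y f(ũ(t), ũ(t − τ̃)), together with the Floquet relation w(t + T) = μ w(t) for all t, for some μ ∈ ℂ with μ^j = 1 for some integer j ≥ 2. Then for every integer k, setting τ_k = τ̃ + jkT: (i) ũ'(t) = f(ũ(t), ũ(t − τ_k)) for all t, and (ii) w satisfies w'(t) = A_k(t)w(t) + B_k(t)w(t − τ_k) for all t, where A_k(t) = ∂ₓf(ũ(t), ũ(t − τ_k)) and B_k(t) = ∂_y f(ũ(t), ũ(t − τ_k)), together with w(t + T) = μ w(t). In other words, ũ is a T-periodic solution of the DDE with delay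 τ_k possessing the Floquet eigenfunction w with multiplier μ. -/
/-!
Since `μ ^ j = 1`, iterating the Floquet relation `j` times shows that `w` is `j T`-periodic,
and so is the `T`-periodic solution `u`. Shifting the delay by `j k T` therefore changes
neither `u (t - τ)` nor `w (t - τ)`, so both equations hold verbatim for the new delay.
-/

open Function

section FloquetRelation

variable {α M X : Type*} [AddMonoid α] [Monoid M] [MulAction M X] {f : α → X} {c : α} {a : M}

theorem add_nsmul_eq_pow_smul_of_add_eq_smul (h : ∀ x, f (x + c) = a • f x) (n : ℕ) (x : α) :
    f (x + n • c) = a ^ n • f x := by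
  induction n with
  | zero => simp
  | succ n ih => rw [succ_nsmul, ← add_assoc, h, ih, ← mul_smul, ← pow_succ']

theorem periodic_nsmul_of_add_eq_smul (h : ∀ x, f (x + c) = a • f x) {n : ℕ} (hn : a ^ n = 1) :
    Periodic f (n • c) := fun x => by
  rw [add_nsmul_eq_pow_smul_of_add_eq_smul h, hn, one_smul]

end FloquetRelation

theorem reappearance_of_critical_Floquet_multipliers_general
    (d : ℕ) (f : (Fin d → ℂ) × (Fin d → ℂ) → Fin d → ℂ)
    (τ T : ℝ) (u w : ℝ → Fin d → ℂ) (μ : ℂ)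
    (j : ℕ) (hμ : μ ^ j = 1)
    (hu : ∀ t : ℝ, HasDerivAt u (f (u t, u (t - τ))) t)
    (hper : ∀ t : ℝ, u (t + T) = u t)
    (hw : ∀ t : ℝ, HasDerivAt w
      (fderiv ℝ (fun x => f (x, u (t - τ))) (u t) (w t)
        + fderiv ℝ (fun y => f (u t, y)) (u (t - τ)) (w (t - τ))) t)
    (hwT : ∀ t : ℝ, w (t + T) = μ • w t) :
    ∀ k : ℤ,
      (∀ t : ℝ, HasDerivAt u (f (u t, u (t - (τ + (j : ℝ) * (k : ℝ) * T)))) t) ∧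
      (∀ t : ℝ, u (t + T) = u t) ∧
      (∀ t : ℝ, HasDerivAt w
        (fderiv ℝ (fun x => f (x, u (t - (τ + (j : ℝ) * (k : ℝ) * T)))) (u t) (w t)
          + fderiv ℝ (fun y => f (u t, y)) (u (t - (τ + (j : ℝ) * (k : ℝ) * T)))
              (w (t - (τ + (j : ℝ) * (k : ℝ) * T)))) t) ∧
      (∀ t : ℝ, w (t + T) = μ • w t) := by
  intro k
  have hshift : (j : ℝ) * k * T = k * (j * T) := by ring
  have hu_per : Periodic u (j * k * T) := hshift ▸ ((Periodic.nat_mul hper j).int_mul k)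
  have hw_per : Periodic w (j * k * T) := by
    have hw_j : Periodic w (j * T) := by
      simpa only [nsmul_eq_mul] using periodic_nsmul_of_add_eq_smul hwT hμ
    exact hshift ▸ hw_j.int_mul k
  have hdelay : ∀ t : ℝ, t - (τ + j * k * T) = t - τ - j * k * T := fun t => by ring
  refine ⟨fun t => ?_, hper, fun t => ?_, hwT⟩
  · simpa only [hdelay, hu_per.sub_eq] using hu t
  · simpa only [hdelay, hu_per.sub_eq, hw_per.sub_eq] using hw t

/-- **Reappearance of critical Floquet multipliers.**
Let `f` be `C¹`, let `u` be a `T`-periodic solution of the DDE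
`u'(t) = f(u(t), u(t - τ̃))` and let `w` be a Floquet eigenfunction of the
variational equation along `u` with multiplier `μ` satisfying `μ ^ j = 1`
for some `j ≥ 2`.  Then for every integer `k`, setting `τ_k = τ̃ + j*k*T`,
the function `u` is a `T`-periodic solution of the DDE with delay `τ_k`
and `w` is a Floquet eigenfunction with multiplier `μ` of the variational
equation along `u` for the delay `τ_k`. -/
theorem reappearance_of_critical_Floquet_multipliers
    (d : ℕ) (f : (Fin d → ℂ) × (Fin d → ℂ) → Fin d → ℂ)
    (hf : ContDiff ℝ 1 f)
    (τ T : ℝ) (hT : 0 < T) (u w : ℝ → Fin d → ℂ) (μ : ℂ)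
    (j : ℕ) (hj : 2 ≤ j) (hμ : μ ^ j = 1)
    (hu : ∀ t : ℝ, HasDerivAt u (f (u t, u (t - τ))) t)
    (hper : ∀ t : ℝ, u (t + T) = u t)
    (hw : ∀ t : ℝ, HasDerivAt w
      (fderiv ℝ (fun x => f (x, u (t - τ))) (u t) (w t)
        + fderiv ℝ (fun y => f (u t, y)) (u (t - τ)) (w (t - τ))) t)
    (hwT : ∀ t : ℝ, w (t + T) = μ • w t) :
    ∀ k : ℤ,
      (∀ t : ℝ, HasDerivAt u (f (u t, u (t - (τ + (j : ℝ) * (k : ℝ) * T)))) t) ∧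
      (∀ t : ℝ, u (t + T) = u t) ∧
      (∀ t : ℝ, HasDerivAt w
        (fderiv ℝ (fun x => f (x, u (t - (τ + (j : ℝ) * (k : ℝ) * T)))) (u t) (w t)
          + fderiv ℝ (fun y => f (u t, y)) (u (t - (τ + (j : ℝ) * (k : ℝ) * T)))
              (w (t - (τ + (j : ℝ) * (k : ℝ) * T)))) t) ∧
      (∀ t : ℝ, w (t + T) = μ • w t) :=
  reappearance_of_critical_Floquet_multipliers_general d f τ T u w μ j hμ hu hper hw hwT
end

section
/- (Reappearance of period-doubling bifurcations.) Let d ∈ ℕ and let f : ℂ^d × ℂ^d → ℂ^d be continuously differentiable. Let ũ : ℝ → ℂ^d be a T-periodic (T > 0) differentiable solution of ũ'(t) = f(ũ(t), ũ(t − τ̃)) for some τ̃ ∈ ℝ, and let w : ℝ → ℂ^d be a differentiable function satisfying w'(t) = ∂ₓf(ũ(t), ũ(t − τ̃))·w(t) + ∂_y f(ũ(t), ũ(t − τ̃))·w(t − τ̃) for all t, together with the anti-periodicity relation w(t + T) = −w(t) for all t. Then for every integer k, with τ_k = τ̃ + 2kT, the function ũ is a T-periodic solution of ũ'(t) = f(ũ(t),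 ũ(t − τ_k)) for all t, and w satisfies w'(t) = ∂ₓf(ũ(t), ũ(t − τ_k))·w(t) + ∂_y f(ũ(t), ũ(t − τ_k))·w(t − τ_k) for all t with w(t + T) = −w(t); that is, the Floquet multiplier −1 reappears at all delays τ̃ + 2kT, k ∈ ℤ. -/
/-! Both `u` and `w` are `2T`-periodic (`w` because it is `T`-antiperiodic), so replacing
the delay `τ` by `τ + 2kT` changes neither `u (t - τ)` nor `w (t - τ)`: the equations with
delay `τ + 2kT` are literally the equations with delay `τ`. -/

theorem Function.Periodic.apply_sub_add_two_int_mul {α : Type*} {f : ℝ → α} {c : ℝ}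
    (h : Function.Periodic f (2 * c)) (k : ℤ) (t τ : ℝ) :
    f (t - (τ + 2 * (k : ℝ) * c)) = f (t - τ) := by
  rw [← h.sub_int_mul_eq (x := t - τ) k]
  ring_nf

theorem reappearance_of_period_doubling_general
    (d : ℕ) (f : (Fin d → ℂ) × (Fin d → ℂ) → Fin d → ℂ)
    (τ T : ℝ) (u w : ℝ → Fin d → ℂ)
    (hu : ∀ t : ℝ, HasDerivAt u (f (u t, u (t - τ))) t)
    (hper : ∀ t : ℝ, u (t + T) = u t)
    (hw : ∀ t : ℝ, HasDerivAt w
      (fderiv ℝ (fun x => f (x, u (t - τ))) (u t) (w t)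
        + fderiv ℝ (fun y => f (u t, y)) (u (t - τ)) (w (t - τ))) t)
    (hwT : ∀ t : ℝ, w (t + T) = -w t) :
    ∀ k : ℤ,
      (∀ t : ℝ, HasDerivAt u (f (u t, u (t - (τ + 2 * (k : ℝ) * T)))) t) ∧
      (∀ t : ℝ, u (t + T) = u t) ∧
      (∀ t : ℝ, HasDerivAt w
        (fderiv ℝ (fun x => f (x, u (t - (τ + 2 * (k : ℝ) * T)))) (u t) (w t)
          + fderiv ℝ (fun y => f (u t, y)) (u (t - (τ + 2 * (k : ℝ) * T)))
              (w (t - (τ + 2 * (k : ℝ) * T)))) t) ∧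
      (∀ t : ℝ, w (t + T) = -w t) := by
  have hu₂ : Function.Periodic u (2 * T) := by
    simpa only [two_mul] using Function.Periodic.add_period hper hper
  have hw₂ : Function.Periodic w (2 * T) := Function.Antiperiodic.periodic_two_mul hwT
  intro k
  refine ⟨fun t => ?_, hper, fun t => ?_, hwT⟩
  · rw [hu₂.apply_sub_add_two_int_mul]
    exact hu t
  · rw [hu₂.apply_sub_add_two_int_mul, hw₂.apply_sub_add_two_int_mul]
    exact hw t

/-- **Reappearance of period-doubling bifurcations.**
Let `f` be `C¹`, let `u` be a `T`-periodic solution of the DDE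
`u'(t) = f(u(t), u(t - τ̃))` and let `w` be a Floquet eigenfunction of the
variational equation along `u` with the anti-periodicity `w(t + T) = -w(t)`
(multiplier `-1`).  Then for every integer `k`, with `τ_k = τ̃ + 2*k*T`,
the function `u` is a `T`-periodic solution of the DDE with delay `τ_k` and
`w` satisfies the corresponding variational equation with delay `τ_k`
together with `w(t + T) = -w(t)`: the Floquet multiplier `-1` reappears at
all delays `τ̃ + 2kT`. -/
theorem reappearance_of_period_doubling
    (d : ℕ) (f : (Fin d → ℂ) × (Fin d → ℂ) → Fin d → ℂ)
    (hf : ContDiff ℝ 1 f)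
    (τ T : ℝ) (hT : 0 < T) (u w : ℝ → Fin d → ℂ)
    (hu : ∀ t : ℝ, HasDerivAt u (f (u t, u (t - τ))) t)
    (hper : ∀ t : ℝ, u (t + T) = u t)
    (hw : ∀ t : ℝ, HasDerivAt w
      (fderiv ℝ (fun x => f (x, u (t - τ))) (u t) (w t)
        + fderiv ℝ (fun y => f (u t, y)) (u (t - τ)) (w (t - τ))) t)
    (hwT : ∀ t : ℝ, w (t + T) = -w t) :
    ∀ k : ℤ,
      (∀ t : ℝ, HasDerivAt u (f (u t, u (t - (τ + 2 * (k : ℝ) * T)))) t) ∧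
      (∀ t : ℝ, u (t + T) = u t) ∧
      (∀ t : ℝ, HasDerivAt w
        (fderiv ℝ (fun x => f (x, u (t - (τ + 2 * (k : ℝ) * T)))) (u t) (w t)
          + fderiv ℝ (fun y => f (u t, y)) (u (t - (τ + 2 * (k : ℝ) * T)))
              (w (t - (τ + 2 * (k : ℝ) * T)))) t) ∧
      (∀ t : ℝ, w (t + T) = -w t) :=
  reappearance_of_period_doubling_general d f τ T u w hu hper hw hwT
end

section
/- (Invariance of the cartesian leaf.) Let a, b ∈ ℝ and let x, y : ℝ → ℝ be differentiable functions satisfying x'(t) = a x(t) + b y(t) − a x(t)² and y'(t) = b x(t) + a y(t) − (3/2) b x(t)² − (3/2) a x(t) y(t) for all t ∈ ℝ. If x(t₀)²(1 − x(t₀)) − y(t₀)² = 0 for some t₀ ∈ ℝ, then x(t)²(1 − x(t)) − y(t)² = 0 for all t ∈ ℝ; that is, the cartesian leaf x²(1 − x) = y² is invariant under the planar flow of Sandstede's model with (μ, μ̃) = (0, 0) restricted to z = 0. -/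
/-!
Along the flow, `V = x²(1 - x) - y²` satisfies the linear equation `V' = a(2 - 3x) V`, so
`V(t) = V(t₀) exp (∫_{t₀}^{t} a(2 - 3x))`, which vanishes identically once `V(t₀) = 0`.
-/

open intervalIntegral

theorem eq_mul_exp_integral_of_hasDerivAt_mul_self {g V : ℝ → ℝ} (hg : Continuous g)
    (hV : ∀ t, HasDerivAt V (g t * V t) t) (t₀ t : ℝ) :
    V t = V t₀ * Real.exp (∫ s in t₀..t, g s) := by
  set G : ℝ → ℝ := fun t => ∫ s in t₀..t, g s
  have hG : ∀ t, HasDerivAt G (g t) t := fun t =>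
    integral_hasDerivAt_right (hg.intervalIntegrable _ _) (hg.stronglyMeasurableAtFilter _ _)
      hg.continuousAt
  -- the integrating factor `exp (-G)` turns the equation into `(V exp (-G))' = 0`
  have hW : ∀ t, HasDerivAt (fun t => V t * Real.exp (-G t)) 0 t := fun t => by
    refine ((hV t).mul (hG t).neg.exp).congr_deriv ?_
    ring
  have hconst := is_const_of_deriv_eq_zero (fun s => (hW s).differentiableAt)
    (fun s => (hW s).deriv) t t₀
  have hGt₀ : G t₀ = 0 := integral_same
  simp only [hGt₀, neg_zero, Real.exp_zero, mul_one] at hconst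
  rw [← hconst, mul_assoc, ← Real.exp_add, neg_add_cancel, Real.exp_zero, mul_one]

theorem eq_zero_of_hasDerivAt_mul_self {g V : ℝ → ℝ} (hg : Continuous g)
    (hV : ∀ t, HasDerivAt V (g t * V t) t) {t₀ : ℝ} (h₀ : V t₀ = 0) (t : ℝ) : V t = 0 := by
  rw [eq_mul_exp_integral_of_hasDerivAt_mul_self hg hV t₀ t, h₀, zero_mul]

def cartesianLeaf (x y : ℝ) : ℝ := x ^ 2 * (1 - x) - y ^ 2

theorem hasDerivAt_cartesianLeaf {a b : ℝ} {x y : ℝ → ℝ} {t : ℝ}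
    (hx : HasDerivAt x (a * x t + b * y t - a * (x t) ^ 2) t)
    (hy : HasDerivAt y
      (b * x t + a * y t - (3 / 2) * b * (x t) ^ 2 - (3 / 2) * a * x t * y t) t) :
    HasDerivAt (fun t => cartesianLeaf (x t) (y t))
      (a * (2 - 3 * x t) * cartesianLeaf (x t) (y t)) t := by
  refine (((hx.pow 2).mul ((hasDerivAt_const t 1).sub hx)).sub (hy.pow 2)).congr_deriv ?_
  simp only [cartesianLeaf, Pi.pow_apply, Pi.sub_apply]
  ring

/-- **Invariance of the cartesian leaf.**
If `x' = ax + by - ax²` and `y' = bx + ay - (3/2)bx² - (3/2)axy`, and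
`x(t₀)²(1 - x(t₀)) - y(t₀)² = 0` at some time `t₀`, then
`x(t)²(1 - x(t)) - y(t)² = 0` for all `t`: the cartesian leaf
`x²(1 - x) = y²` is invariant under the planar Sandstede flow. -/
theorem cartesian_leaf_invariant
    (a b : ℝ) (x y : ℝ → ℝ)
    (hx : ∀ t : ℝ, HasDerivAt x (a * x t + b * y t - a * (x t) ^ 2) t)
    (hy : ∀ t : ℝ, HasDerivAt y
      (b * x t + a * y t - (3 / 2) * b * (x t) ^ 2 - (3 / 2) * a * x t * y t) t)
    (t₀ : ℝ) (h0 : (x t₀) ^ 2 * (1 - x t₀) - (y t₀) ^ 2 = 0) :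
    ∀ t : ℝ, (x t) ^ 2 * (1 - x t) - (y t) ^ 2 = 0 := by
  have hxc : Continuous x := continuous_iff_continuousAt.mpr fun t => (hx t).continuousAt
  exact eq_zero_of_hasDerivAt_mul_self (by fun_prop)
    (fun t => hasDerivAt_cartesianLeaf (hx t) (hy t)) h0
end
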